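/- Let F be a field of characteristic different from 2 and 3 and let Δ ∈ F*. The binary cubic form 3x²y + Δy³ has discriminant 4Δ and is reducible over F, and every reducible binary cubic form over F of discriminant 4Δ is SL₂(F)-equivalent to 3x²y + Δy³. In particular, there is exactly one SL₂(F)-orbit of reducible binary cubic forms over F of discriminant 4Δ. -/

import Mathlib

/-- A binary cubic form `a x³ + 3b x²y + 3c xy² + d y³` over a commutative ring,
recorded by its coefficient quadruple `(a, b, c, d)`. -/
structure BinaryCubic (R : Type*) [CommRing R] where
  a : R
  b : R
  c : R
  d : R

namespace BinaryCubic

variable {R : Type*} [CommRing R]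

/-- Evaluation of the binary cubic form `a x³ + 3b x²y + 3c xy² + d y³`. -/
def eval (f : BinaryCubic R) (x y : R) : R :=
  f.a * x ^ 3 + 3 * f.b * x ^ 2 * y + 3 * f.c * x * y ^ 2 + f.d * y ^ 3

/-- The discriminant `a²d² − 3b²c² + 4ac³ + 4b³d − 6abcd` of a binary cubic form. -/
def disc (f : BinaryCubic R) : R :=
  f.a ^ 2 * f.d ^ 2 - 3 * f.b ^ 2 * f.c ^ 2 + 4 * f.a * f.c ^ 3 + 4 * f.b ^ 3 * f.d
    - 6 * f.a * f.b * f.c * f.d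

/-- The action of a 2×2 matrix `g = (p q; r s)` on binary cubic forms by linear change of
variables: `(g · f)(x, y) = f (p x + q y) (r x + s y)`, written out on coefficients. -/
def act (g : Matrix (Fin 2) (Fin 2) R) (f : BinaryCubic R) : BinaryCubic R where
  a := f.a * g 0 0 ^ 3 + 3 * f.b * g 0 0 ^ 2 * g 1 0 + 3 * f.c * g 0 0 * g 1 0 ^ 2
      + f.d * g 1 0 ^ 3
  b := f.a * g 0 0 ^ 2 * g 0 1
      + f.b * (g 0 0 ^ 2 * g 1 1 + 2 * g 0 0 * g 0 1 * g 1 0)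
      + f.c * (2 * g 0 0 * g 1 0 * g 1 1 + g 0 1 * g 1 0 ^ 2)
      + f.d * g 1 0 ^ 2 * g 1 1
  c := f.a * g 0 0 * g 0 1 ^ 2
      + f.b * (g 0 1 ^ 2 * g 1 0 + 2 * g 0 0 * g 0 1 * g 1 1)
      + f.c * (g 0 0 * g 1 1 ^ 2 + 2 * g 0 1 * g 1 0 * g 1 1)
      + f.d * g 1 0 * g 1 1 ^ 2
  d := f.a * g 0 1 ^ 3 + 3 * f.b * g 0 1 ^ 2 * g 1 1 + 3 * f.c * g 0 1 * g 1 1 ^ 2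
      + f.d * g 1 1 ^ 3

/-- Sanity check: `act` really is the linear change of variables. -/
theorem eval_act (g : Matrix (Fin 2) (Fin 2) R) (f : BinaryCubic R) (x y : R) :
    (act g f).eval x y = f.eval (g 0 0 * x + g 0 1 * y) (g 1 0 * x + g 1 1 * y) := by
  simp only [eval, act]; ring

/-- Two binary cubic forms over `R` are `SL₂(R)`-equivalent if they are related by a
determinant-one linear change of variables. -/
def SLEquiv (f f' : BinaryCubic R) : Prop :=
  ∃ g : Matrix (Fin 2) (Fin 2) R, g.det = 1 ∧ act g f = f'

/-- Scalar multiplication of a binary cubic form (multiplying all coefficients). -/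
def smul (r : R) (f : BinaryCubic R) : BinaryCubic R :=
  ⟨r * f.a, r * f.b, r * f.c, r * f.d⟩

/-- The scaled Hessian `h_f(x,y) = (b²−ac)x² + (bc−ad)xy + (c²−bd)y²` of a binary cubic form. -/
def hess (f : BinaryCubic R) (x y : R) : R :=
  (f.b ^ 2 - f.a * f.c) * x ^ 2 + (f.b * f.c - f.a * f.d) * x * y
    + (f.c ^ 2 - f.b * f.d) * y ^ 2

/-- The Jacobian covariant `g_f = f_x · (h_f)_y − f_y · (h_f)_x` of a binary cubic form,
written out as a function of `x` and `y`. -/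
def gcov (f : BinaryCubic R) (x y : R) : R :=
  (3 * f.a * x ^ 2 + 6 * f.b * x * y + 3 * f.c * y ^ 2)
      * ((f.b * f.c - f.a * f.d) * x + 2 * (f.c ^ 2 - f.b * f.d) * y)
    - (3 * f.b * x ^ 2 + 6 * f.c * x * y + 3 * f.d * y ^ 2)
      * (2 * (f.b ^ 2 - f.a * f.c) * x + (f.b * f.c - f.a * f.d) * y)

/-- A binary cubic form over a field is reducible if it factors as a homogeneous linear form
times a homogeneous quadratic form over the field. -/
def Reducible {F : Type*} [Field F] (f : BinaryCubic F) : Prop :=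
  ∃ l₁ l₂ q₁ q₂ q₃ : F, ∀ x y : F,
    f.eval x y = (l₁ * x + l₂ * y) * (q₁ * x ^ 2 + q₂ * x * y + q₃ * y ^ 2)

/-- Coefficientwise image of a binary cubic form under a ring homomorphism. -/
def map {R S : Type*} [CommRing R] [CommRing S] (φ : R →+* S) (f : BinaryCubic R) :
    BinaryCubic S :=
  ⟨φ f.a, φ f.b, φ f.c, φ f.d⟩

end BinaryCubic

/-!
A linear factor `l₁ x + l₂ y` of `f` gives the root `(l₂, -l₁)`, which is nonzero because a form
vanishing at every point has discriminant `0` once `2 ≠ 0`. An `SL₂`-move sending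
`(1, 0)` to it kills the coefficient `a`. Then `disc f = b² (4bd − 3c²)`, so `b ≠ 0`, and the
substitution `x ↦ x/b − (c/2) y`, `y ↦ b y` brings `f` to `(0, 1, 0, disc f / 4)`.
-/

namespace BinaryCubic

section CommRing

variable {R : Type*} [CommRing R]

lemma act_mul (g h : Matrix (Fin 2) (Fin 2) R) (f : BinaryCubic R) :
    act (h * g) f = act g (act h f) := by
  simp only [act, Matrix.mul_apply, Fin.sum_univ_two, mk.injEq]
  refine ⟨by ring, by ring, by ring, by ring⟩

lemma disc_act (g : Matrix (Fin 2) (Fin 2) R) (f : BinaryCubic R) :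
    disc (act g f) = g.det ^ 6 * disc f := by
  simp only [disc, act, Matrix.det_fin_two]
  ring

lemma act_a (g : Matrix (Fin 2) (Fin 2) R) (f : BinaryCubic R) :
    (act g f).a = f.eval (g 0 0) (g 1 0) :=
  rfl

lemma SLEquiv.trans {f f' f'' : BinaryCubic R} (h : SLEquiv f f') (h' : SLEquiv f' f'') :
    SLEquiv f f'' := by
  obtain ⟨g, hg, rfl⟩ := h
  obtain ⟨g', hg', rfl⟩ := h'
  exact ⟨g * g', by rw [Matrix.det_mul, hg, hg', one_mul], act_mul g' g f⟩

lemma SLEquiv.disc_eq {f f' : BinaryCubic R} (h : SLEquiv f f') : disc f' = disc f := by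
  obtain ⟨g, hg, rfl⟩ := h
  rw [disc_act, hg, one_pow, one_mul]

lemma b_ne_zero_of_a_eq_zero {f : BinaryCubic R} (ha : f.a = 0) (hdisc : disc f ≠ 0) :
    f.b ≠ 0 := by
  rintro hb
  simp [disc, ha, hb] at hdisc

end CommRing

variable {F : Type*} [Field F]

lemma exists_det_eq_one_col {u v : F} (huv : u ≠ 0 ∨ v ≠ 0) :
    ∃ g : Matrix (Fin 2) (Fin 2) F, g.det = 1 ∧ g 0 0 = u ∧ g 1 0 = v := by
  by_cases hu : u = 0
  · have hv : v ≠ 0 := huv.resolve_left (not_not.mpr hu)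
    refine ⟨!![u, -v⁻¹; v, 0], ?_, rfl, rfl⟩
    rw [Matrix.det_fin_two_of, hu]
    field_simp
    ring
  · refine ⟨!![u, 0; v, u⁻¹], ?_, rfl, rfl⟩
    rw [Matrix.det_fin_two_of]
    field_simp
    ring

lemma exists_slEquiv_a_eq_zero {f : BinaryCubic F} {u v : F} (huv : u ≠ 0 ∨ v ≠ 0)
    (hroot : f.eval u v = 0) : ∃ f' : BinaryCubic F, SLEquiv f f' ∧ f'.a = 0 := by
  obtain ⟨g, hg, hu, hv⟩ := exists_det_eq_one_col huv
  exact ⟨act g f, ⟨g, hg, rfl⟩, by rw [act_a, hu, hv, hroot]⟩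

lemma disc_eq_zero_of_eval_eq_zero (h2 : (2 : F) ≠ 0) {f : BinaryCubic F}
    (hf : ∀ x y, f.eval x y = 0) : disc f = 0 := by
  have ha : f.a = 0 := by simpa [eval] using hf 1 0
  have hd : f.d = 0 := by simpa [eval] using hf 0 1
  have h3b : 3 * f.b = 0 := by
    have e₁ := hf 1 1
    have e₂ := hf 1 (-1)
    simp only [eval, ha, hd] at e₁ e₂
    have h6b : 2 * (3 * f.b) = 0 := by linear_combination e₁ - e₂
    exact (mul_eq_zero.mp h6b).resolve_left h2
  simp only [disc, ha, hd]
  linear_combination (-f.b * f.c ^ 2) * h3b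

lemma Reducible.exists_root (h2 : (2 : F) ≠ 0) {f : BinaryCubic F} (hf : Reducible f)
    (hdisc : disc f ≠ 0) : ∃ u v : F, (u ≠ 0 ∨ v ≠ 0) ∧ f.eval u v = 0 := by
  obtain ⟨l₁, l₂, q₁, q₂, q₃, hfac⟩ := hf
  refine ⟨l₂, -l₁, ?_, by rw [hfac]; ring⟩
  by_contra! hl
  refine hdisc (disc_eq_zero_of_eval_eq_zero h2 fun x y => ?_)
  rw [hfac, hl.1, neg_eq_zero.mp hl.2]
  ring

lemma slEquiv_normalForm_of_a_eq_zero (h2 : (2 : F) ≠ 0) {f : BinaryCubic F} (ha : f.a = 0)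
    (hb : f.b ≠ 0) {Δ : F} (hdisc : disc f = 4 * Δ) : SLEquiv f ⟨0, 1, 0, Δ⟩ := by
  refine ⟨!![f.b⁻¹, -(f.c / 2); 0, f.b], ?_, ?_⟩
  · rw [Matrix.det_fin_two_of]
    field_simp
    ring
  · simp only [disc, ha] at hdisc
    simp only [act, ha, Matrix.of_apply, Matrix.cons_val', Matrix.cons_val_zero,
      Matrix.cons_val_one, Matrix.empty_val', Matrix.cons_val_fin_one, mk.injEq]
    refine ⟨by ring, by field_simp; ring, by field_simp; ring, ?_⟩
    field_simp
    linear_combination 2 * hdisc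

end BinaryCubic

open BinaryCubic in
theorem reducible_orbit_unique_general {F : Type*} [Field F]
    (h2 : (2 : F) ≠ 0) (Δ : F) (hΔ : Δ ≠ 0) :
    disc (⟨0, 1, 0, Δ⟩ : BinaryCubic F) = 4 * Δ ∧
    Reducible (⟨0, 1, 0, Δ⟩ : BinaryCubic F) ∧
    ∀ f : BinaryCubic F, Reducible f → disc f = 4 * Δ →
      SLEquiv f (⟨0, 1, 0, Δ⟩ : BinaryCubic F) := by
  refine ⟨by simp only [disc]; ring, ⟨0, 1, 3, 0, Δ, fun x y => by simp only [eval]; ring⟩, ?_⟩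
  intro f hf hdisc
  have hdisc₀ : disc f ≠ 0 := by
    rw [hdisc]
    exact mul_ne_zero (by simpa [show (4 : F) = 2 * 2 by norm_num] using h2) hΔ
  obtain ⟨u, v, huv, hroot⟩ := hf.exists_root h2 hdisc₀
  obtain ⟨f', hff', ha⟩ := exists_slEquiv_a_eq_zero huv hroot
  rw [← hff'.disc_eq] at hdisc hdisc₀
  exact hff'.trans (slEquiv_normalForm_of_a_eq_zero h2 ha (b_ne_zero_of_a_eq_zero ha hdisc₀) hdisc)

open BinaryCubic in
/-- Over a field `F` of characteristic ≠ 2, 3 and for `Δ ∈ F*`, the binary cubic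
form `3x²y + Δy³` has discriminant `4Δ` and is reducible, and every reducible binary cubic form
over `F` of discriminant `4Δ` is `SL₂(F)`-equivalent to it; in particular there is exactly one
`SL₂(F)`-orbit of reducible binary cubic forms of discriminant `4Δ`. -/
theorem reducible_orbit_unique {F : Type*} [Field F]
    (h2 : (2 : F) ≠ 0) (h3 : (3 : F) ≠ 0) (Δ : F) (hΔ : Δ ≠ 0) :
    disc (⟨0, 1, 0, Δ⟩ : BinaryCubic F) = 4 * Δ ∧
    Reducible (⟨0, 1, 0, Δ⟩ : BinaryCubic F) ∧
    ∀ f : BinaryCubic F, Reducible f → disc f = 4 * Δ →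
      SLEquiv f (⟨0, 1, 0, Δ⟩ : BinaryCubic F) :=
  reducible_orbit_unique_general h2 Δ hΔ
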